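/- Let (A,·) be the semigroup K-algebra of the rectangular band I×J and let * be an associative bilinear product on A that is (12)-matching with ·. Then there exist a scalar λ ∈ K (independent of i and j) and elements r_{ij} ∈ Ann(A) such that e_{ij} * e_{ij} = λe_{ij} + r_{ij} for all (i,j) ∈ I×J. -/

import Mathlib

/-!
Write `⋆` for the second product and `σ := e.sumCoords`. Since `e i j * e k l = e i l`, `σ` is a
character of `A` and `e i j * a * e k l = σ a • e i l`. Applying `σ` to the matching identity
`(x ⋆ y) * z = x * (y ⋆ z)` on basis vectors gives `σ (e p ⋆ e q) = σ (e q ⋆ e r)`, so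
`λ := σ (e p ⋆ e p)` does not depend on `p`. The same identity with `x = y = z = e p` says that
`e p ⋆ e p` commutes with `e p`, and any `s` commuting with `e (i, j)` multiplies basis vectors,
on either side, exactly as `σ s • e (i, j)` does; so `s - σ s • e (i, j)` lies in the annihilator.
-/

namespace RectangularBand

open Module

variable {K A I J : Type*} [CommSemiring K]

section NonAssoc

variable [NonUnitalNonAssocSemiring A] [Module K A]

def IsBandBasis (e : Basis (I × J) K A) : Prop :=
  ∀ (i k : I) (j l : J), e (i, j) * e (k, l) = e (i, l)

section Basis

variable {ι : Type*} (b : Basis ι K A) {r : A}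

theorem mul_eq_zero_of_forall_mul_basis [SMulCommClass K A A] (h : ∀ p, r * b p = 0) (a : A) :
    r * a = 0 :=
  LinearMap.congr_fun (b.ext (f₁ := LinearMap.mulLeft K r) (f₂ := 0) h) a

theorem mul_eq_zero_of_forall_basis_mul [IsScalarTower K A A] (h : ∀ p, b p * r = 0) (a : A) :
    a * r = 0 :=
  LinearMap.congr_fun (b.ext (f₁ := LinearMap.mulRight K r) (f₂ := 0) h) a

end Basis

variable {e : Basis (I × J) K A} (he : IsBandBasis e)
include he

theorem mul_basis_eq_mul_basis [IsScalarTower K A A] (a : A) (k k' : I) (l : J) :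
    a * e (k, l) = a * e (k', l) :=
  LinearMap.congr_fun (e.ext (f₁ := LinearMap.mulRight K (e (k, l)))
    (f₂ := LinearMap.mulRight K (e (k', l))) fun ⟨i, j⟩ => by
      simp only [LinearMap.mulRight_apply]; rw [he, he]) a

theorem basis_mul_eq_basis_mul [SMulCommClass K A A] (a : A) (k : I) (l l' : J) :
    e (k, l) * a = e (k, l') * a :=
  LinearMap.congr_fun (e.ext (f₁ := LinearMap.mulLeft K (e (k, l)))
    (f₂ := LinearMap.mulLeft K (e (k, l'))) fun ⟨i, j⟩ => by
      simp only [LinearMap.mulLeft_apply]; rw [he, he]) a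

variable [SMulCommClass K A A] [IsScalarTower K A A]

theorem basis_mul_mul_basis (a : A) (i k : I) (j l : J) :
    e (i, j) * a * e (k, l) = e.sumCoords a • e (i, l) := by
  have key : LinearMap.mulRight K (e (k, l)) ∘ₗ LinearMap.mulLeft K (e (i, j)) =
      e.sumCoords.smulRight (e (i, l)) :=
    e.ext fun ⟨p, q⟩ => by
      simp only [LinearMap.comp_apply, LinearMap.mulLeft_apply, LinearMap.mulRight_apply,
        LinearMap.smulRight_apply, Basis.sumCoords_self_apply, one_smul]
      rw [he, he]
  exact LinearMap.congr_fun key a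

theorem sumCoords_mul (a b : A) : e.sumCoords (a * b) = e.sumCoords a * e.sumCoords b := by
  have key : (LinearMap.mul K A).compr₂ e.sumCoords =
      (LinearMap.mul K K).compl₁₂ e.sumCoords e.sumCoords :=
    e.ext fun ⟨i, j⟩ => e.ext fun ⟨k, l⟩ => by
      simp only [LinearMap.compr₂_apply, LinearMap.compl₁₂_apply, LinearMap.mul_apply',
        Basis.sumCoords_self_apply, mul_one]
      rw [he, Basis.sumCoords_self_apply]
  exact LinearMap.congr_fun₂ key a b

theorem sumCoords_self_eq_of_matching (m : A → A → A) (hm : ∀ a b c, m a b * c = a * m b c)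
    (p q : I × J) : e.sumCoords (m (e p) (e p)) = e.sumCoords (m (e q) (e q)) := by
  have h (p q r : I × J) : e.sumCoords (m (e p) (e q)) = e.sumCoords (m (e q) (e r)) := by
    simpa only [sumCoords_mul he, Basis.sumCoords_self_apply, mul_one, one_mul]
      using congrArg e.sumCoords (hm (e p) (e q) (e r))
  exact (h p p q).trans (h p q q)

end NonAssoc

section Ring

variable [NonUnitalRing A] [Module K A] [SMulCommClass K A A] [IsScalarTower K A A]
  {e : Basis (I × J) K A} (he : IsBandBasis e) {s : A} {i : I} {j : J}
include he

theorem mul_basis_of_commute (hs : Commute s (e (i, j))) (k : I) (l : J) :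
    s * e (k, l) = e.sumCoords s • e (i, l) :=
  calc s * e (k, l) = s * (e (i, j) * e (i, l)) := by rw [mul_basis_eq_mul_basis he s k i, he]
    _ = e (i, j) * s * e (i, l) := by rw [← mul_assoc, hs.eq]
    _ = e.sumCoords s • e (i, l) := basis_mul_mul_basis he s i i j l

theorem basis_mul_of_commute (hs : Commute s (e (i, j))) (k : I) (l : J) :
    e (k, l) * s = e.sumCoords s • e (k, j) :=
  calc e (k, l) * s = e (k, j) * e (i, j) * s := by rw [basis_mul_eq_basis_mul he s k l j, he]
    _ = e (k, j) * s * e (i, j) := by rw [mul_assoc, ← hs.eq, ← mul_assoc]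
    _ = e.sumCoords s • e (k, j) := basis_mul_mul_basis he s k i j j

theorem annihilates_sub_sumCoords_smul_of_commute (hs : Commute s (e (i, j))) (a : A) :
    (s - e.sumCoords s • e (i, j)) * a = 0 ∧ a * (s - e.sumCoords s • e (i, j)) = 0 := by
  refine ⟨mul_eq_zero_of_forall_mul_basis e (fun ⟨k, l⟩ => ?_) a,
    mul_eq_zero_of_forall_basis_mul e (fun ⟨k, l⟩ => ?_) a⟩
  · rw [sub_mul, smul_mul_assoc, mul_basis_of_commute he hs, he, sub_self]
  · rw [mul_sub, mul_smul_comm, basis_mul_of_commute he hs, he, sub_self]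

end Ring

end RectangularBand

theorem twelve_matching_diagonal_decomposition_general {K A I J : Type*} [Field K]
    [NonUnitalRing A] [Module K A] [SMulCommClass K A A] [IsScalarTower K A A]
    [Nonempty I] [Nonempty J]
    (e : Module.Basis (I × J) K A)
    (hmul : ∀ (i k : I) (j l : J), e (i, j) * e (k, l) = e (i, l))
    (star : A →ₗ[K] A →ₗ[K] A)
    (hmatch1 : ∀ a b c : A, star a b * c = a * star b c) :
    ∃ lam : K, ∀ (i : I) (j : J), ∃ r : A,
      (∀ b : A, r * b = 0 ∧ b * r = 0) ∧
      star (e (i, j)) (e (i, j)) = lam • e (i, j) + r := by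
  obtain ⟨p₀⟩ : Nonempty (I × J) := inferInstance
  refine ⟨e.sumCoords (star (e p₀) (e p₀)), fun i j => ?_⟩
  have hs : Commute (star (e (i, j)) (e (i, j))) (e (i, j)) := hmatch1 _ _ _
  refine ⟨_, RectangularBand.annihilates_sub_sumCoords_smul_of_commute hmul hs, ?_⟩
  rw [RectangularBand.sumCoords_self_eq_of_matching hmul (fun a b => star a b) hmatch1 p₀ (i, j),
    add_sub_cancel]

/-- For the semigroup algebra `(A, ·)` of the rectangular band `I × J` over a field `K`
and an associative bilinear product `*` on `A` that is `(12)`-matching with `·`, there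
exist `λ ∈ K` (independent of `i, j`) and elements `r_{ij} ∈ Ann(A)` such that
`e_{ij} * e_{ij} = λ • e_{ij} + r_{ij}` for all `(i,j) ∈ I × J`. -/
theorem twelve_matching_diagonal_decomposition {K A I J : Type*} [Field K]
    [NonUnitalRing A] [Module K A] [SMulCommClass K A A] [IsScalarTower K A A]
    [Nonempty I] [Nonempty J]
    (e : Module.Basis (I × J) K A)
    (hmul : ∀ (i k : I) (j l : J), e (i, j) * e (k, l) = e (i, l))
    (star : A →ₗ[K] A →ₗ[K] A)
    (hassoc : ∀ a b c : A, star (star a b) c = star a (star b c))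
    (hmatch1 : ∀ a b c : A, star a b * c = a * star b c)
    (hmatch2 : ∀ a b c : A, star (a * b) c = star a (b * c)) :
    ∃ lam : K, ∀ (i : I) (j : J), ∃ r : A,
      (∀ b : A, r * b = 0 ∧ b * r = 0) ∧
      star (e (i, j)) (e (i, j)) = lam • e (i, j) + r :=
  twelve_matching_diagonal_decomposition_general e hmul star hmatch1
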